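/- Let $G: (0,\infty) \to \mathbb{R}$ be a $C^1$ function with $G > 0$, $G' \geq 0$, and suppose there is a constant $C_0 > 0$ such that $G'(x)x \leq C_0 G(x)$ for all sufficiently large $x$. Then for all sufficiently large $z > 0$: $1 - G(z)z^2 \int_z^{+\infty} \frac{G'(x)}{G(x)^2 x^2}\,dx \geq \frac{2}{2+C_0}$. -/

import Mathlib

open Set MeasureTheory Filter Topology

/-!
With `f x = -(G x x²)⁻¹` one has `f' = G'/(G² x²) + 2/(G x³)`, and `f ≤ 0`, so the fundamental
theorem of calculus on `[z, ∞)` gives `I + 2J ≤ (G z z²)⁻¹` for `I = ∫_z^∞ G'/(G² x²)` and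
`J = ∫_z^∞ 1/(G x³)`. The growth condition `G' x ≤ C₀ G` gives `I ≤ C₀ J`, hence
`(2 + C₀) I ≤ C₀ (I + 2J) ≤ C₀ (G z z²)⁻¹`.
-/

theorem integral_Ioi_le_neg_of_hasDerivAt_of_eventually_nonpos {f f' : ℝ → ℝ} {a : ℝ}
    (hderiv : ∀ x ∈ Ici a, HasDerivAt f (f' x) x) (hint : IntegrableOn f' (Ioi a))
    (hf : ∀ᶠ x in atTop, f x ≤ 0) :
    ∫ x in Ioi a, f' x ≤ -f a := by
  have hlim := tendsto_limUnder_of_hasDerivAt_of_integrableOn_Ioi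
    (fun x hx => hderiv x (mem_Ici_of_Ioi hx)) hint
  have hlim_nonpos : limUnder atTop f ≤ 0 := le_of_tendsto hlim hf
  rw [integral_Ioi_of_hasDerivAt_of_tendsto' hderiv hint hlim]
  linarith

theorem hasDerivAt_neg_inv_mul_sq {G : ℝ → ℝ} {x : ℝ} (hG : DifferentiableAt ℝ G x)
    (hGx : G x ≠ 0) (hx : x ≠ 0) :
    HasDerivAt (fun x => -(G x * x ^ 2)⁻¹)
      (deriv G x / (G x ^ 2 * x ^ 2) + 2 * (1 / (G x * x ^ 3))) x := by
  have hprod : HasDerivAt (fun x => G x * x ^ 2) (deriv G x * x ^ 2 + G x * (2 * x)) x :=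
    (hG.hasDerivAt.mul (hasDerivAt_pow 2 x)).congr_deriv (by norm_num)
  refine (hprod.inv (by positivity)).neg.congr_deriv ?_
  field_simp

theorem integral_Ioi_add_two_mul_integral_Ioi_le {G : ℝ → ℝ} {z : ℝ} (hz : 0 < z)
    (hGpos : ∀ x ≥ z, 0 < G x) (hGdiff : ∀ x ≥ z, DifferentiableAt ℝ G x)
    (hint₁ : IntegrableOn (fun x => 1 / (G x * x ^ 3)) (Ioi z))
    (hint₂ : IntegrableOn (fun x => deriv G x / (G x ^ 2 * x ^ 2)) (Ioi z)) :
    (∫ x in Ioi z, deriv G x / (G x ^ 2 * x ^ 2)) + 2 * ∫ x in Ioi z, 1 / (G x * x ^ 3)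
      ≤ (G z * z ^ 2)⁻¹ := by
  have hderiv : ∀ x ∈ Ici z, HasDerivAt (fun x => -(G x * x ^ 2)⁻¹)
      (deriv G x / (G x ^ 2 * x ^ 2) + 2 * (1 / (G x * x ^ 3))) x := fun x hx =>
    hasDerivAt_neg_inv_mul_sq (hGdiff x hx) (hGpos x hx).ne' (hz.trans_le hx).ne'
  have hnonpos : ∀ᶠ x in atTop, -(G x * x ^ 2)⁻¹ ≤ 0 := by
    filter_upwards [eventually_ge_atTop z] with x hx
    have := hGpos x hx
    simp only [neg_nonpos]
    positivity
  have h := integral_Ioi_le_neg_of_hasDerivAt_of_eventually_nonpos hderiv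
    (hint₂.add (hint₁.const_mul 2)) hnonpos
  rwa [integral_add hint₂ (hint₁.const_mul 2), integral_const_mul, neg_neg] at h

theorem div_sq_mul_sq_le_of_deriv_mul_le {G : ℝ → ℝ} {C₀ x : ℝ} (hx : 0 < x) (hGx : 0 < G x)
    (hC : deriv G x * x ≤ C₀ * G x) :
    deriv G x / (G x ^ 2 * x ^ 2) ≤ C₀ * (1 / (G x * x ^ 3)) := by
  rw [mul_one_div, div_le_div_iff₀ (by positivity) (by positivity)]
  nlinarith [mul_le_mul_of_nonneg_right hC (by positivity : (0:ℝ) ≤ G x * x ^ 2)]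

theorem tail_integral_estimate_general (G : ℝ → ℝ) (C₀ : ℝ) (hC₀ : 0 < C₀)
    (hGpos : ∀ x > (0:ℝ), 0 < G x)
    (hGdiff : ∀ x > (0:ℝ), DifferentiableAt ℝ G x)
    (hC : ∃ x₁ > (0:ℝ), ∀ x ≥ x₁, deriv G x * x ≤ C₀ * G x)
    (hint₁ : ∀ z > (0:ℝ),
      IntegrableOn (fun x => 1 / (G x * x ^ 3)) (Ioi z))
    (hint₂ : ∀ z > (0:ℝ),
      IntegrableOn (fun x => deriv G x / ((G x) ^ 2 * x ^ 2)) (Ioi z)) :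
    ∃ z₀ > (0:ℝ), ∀ z ≥ z₀,
      2 / (2 + C₀) ≤
        1 - G z * z ^ 2 * ∫ x in Ioi z, deriv G x / ((G x) ^ 2 * x ^ 2) := by
  obtain ⟨x₁, hx₁, hCx₁⟩ := hC
  refine ⟨x₁, hx₁, fun z hz => ?_⟩
  have hzpos : 0 < z := hx₁.trans_le hz
  set I := ∫ x in Ioi z, deriv G x / (G x ^ 2 * x ^ 2)
  set J := ∫ x in Ioi z, 1 / (G x * x ^ 3)
  have hsum : I + 2 * J ≤ (G z * z ^ 2)⁻¹ :=
    integral_Ioi_add_two_mul_integral_Ioi_le hzpos (fun x hx => hGpos x (hzpos.trans_le hx))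
      (fun x hx => hGdiff x (hzpos.trans_le hx)) (hint₁ z hzpos) (hint₂ z hzpos)
  have hIJ : I ≤ C₀ * J := by
    rw [← integral_const_mul]
    refine setIntegral_mono_on (hint₂ z hzpos) ((hint₁ z hzpos).const_mul C₀)
      measurableSet_Ioi fun x hx => ?_
    have hx : z < x := hx
    exact div_sq_mul_sq_le_of_deriv_mul_le (hzpos.trans hx) (hGpos x (hzpos.trans hx))
      (hCx₁ x (hz.trans hx.le))
  have hA : 0 < G z * z ^ 2 := by have := hGpos z hzpos; positivity
  have hI : (2 + C₀) * I ≤ (G z * z ^ 2)⁻¹ * C₀ := by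
    linarith [mul_le_mul_of_nonneg_right hsum hC₀.le]
  have hbound : G z * z ^ 2 * I * (2 + C₀) ≤ C₀ :=
    calc G z * z ^ 2 * I * (2 + C₀) = G z * z ^ 2 * ((2 + C₀) * I) := by ring
      _ ≤ G z * z ^ 2 * ((G z * z ^ 2)⁻¹ * C₀) := mul_le_mul_of_nonneg_left hI hA.le
      _ = C₀ := mul_inv_cancel_left₀ hA.ne' C₀
  rw [div_le_iff₀ (by positivity)]
  linarith

/-- The tail-integral estimate (3.38): for `z` large,
`1 - G(z) z² ∫_z^∞ G'(x)/(G(x)² x²) dx ≥ 2/(2+C₀)`. -/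
theorem tail_integral_estimate (G : ℝ → ℝ) (C₀ : ℝ) (hC₀ : 0 < C₀)
    (hGpos : ∀ x > (0:ℝ), 0 < G x)
    (hGdiff : ∀ x > (0:ℝ), DifferentiableAt ℝ G x)
    (hG'cont : ContinuousOn (deriv G) (Ioi 0))
    (hG'nn : ∀ x > (0:ℝ), 0 ≤ deriv G x)
    (hC : ∃ x₁ > (0:ℝ), ∀ x ≥ x₁, deriv G x * x ≤ C₀ * G x)
    (hint₁ : ∀ z > (0:ℝ),
      IntegrableOn (fun x => 1 / (G x * x ^ 3)) (Ioi z))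
    (hint₂ : ∀ z > (0:ℝ),
      IntegrableOn (fun x => deriv G x / ((G x) ^ 2 * x ^ 2)) (Ioi z)) :
    ∃ z₀ > (0:ℝ), ∀ z ≥ z₀,
      2 / (2 + C₀) ≤
        1 - G z * z ^ 2 * ∫ x in Ioi z, deriv G x / ((G x) ^ 2 * x ^ 2) :=
  tail_integral_estimate_general G C₀ hC₀ hGpos hGdiff hC hint₁ hint₂
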